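/- arXiv:1808.07550 — 5 statements merged into one kernel-verified Lean document; each statement's English description precedes it below -/
import Mathlib

section
/- Let c be a complex number with Re(c) < -1. Then the topological closure in ℂ of the set {σ_c(n) : n ∈ ℕ+} equals the set {Σ_c(α) : α a function from the set of primes to ℕ ∪ {∞}}. -/
open scoped BigOperators

/-- The divisor function `σ_c(n) = ∑_{d ∣ n} d^c` for complex `c`. -/
noncomputable def sigmaC (c : ℂ) (n : ℕ) : ℂ := ∑ d ∈ n.divisors, (d : ℂ) ^ c

/-- `f_p(k) = σ_c(p^k) = ∑_{j=0}^k p^{cj}` for finite `k`, and `f_p(∞) = (1 - p^c)⁻¹`. -/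
noncomputable def fC (c : ℂ) (p : ℕ) (k : ℕ∞) : ℂ :=
  if k = ⊤ then (1 - (p : ℂ) ^ c)⁻¹
  else ∑ j ∈ Finset.range (k.toNat + 1), (p : ℂ) ^ (c * (j : ℂ))

/-- The value of `σ_c` on the Steinitz number encoded by `α`. -/
noncomputable def steinitzValC (c : ℂ) (α : Nat.Primes → ℕ∞) : ℂ :=
  ∏' p : Nat.Primes, fC c (p : ℕ) (α p)

/-!
The map `α ↦ Σ_c(α)` is continuous on the compact space `Nat.Primes → ℕ∞`: each factor `f_p` is
continuous on `ℕ∞` (at `∞` this is the convergence of the geometric series in `p^c`), and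
`‖f_p(k) - 1‖ ≤ 2 ‖p^c‖` uniformly in `k`, with `∑_p ‖p^c‖ < ∞`, so the product converges
uniformly. Since `σ_c(n) = Σ_c(v_n)` for the vector `v_n` of prime exponents of `n`, the set of
values of `σ_c` is the image under `Σ_c` of `{v_n}`, which is dense (truncate `α` to the primes
below `m` and to height `m`). A continuous map on a compact space commutes with closure.
-/

open Complex Filter Finset Topology

theorem ENat.continuous_of_tendsto_natCast {X : Type*} [TopologicalSpace X] {f : ℕ∞ → X}
    (h : Tendsto (fun n : ℕ => f n) atTop (𝓝 (f ⊤))) : Continuous f := by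
  refine continuous_iff_continuousAt.2 fun k => ?_
  induction k using ENat.recTopCoe with
  | top =>
    refine nhds_top_basis.tendsto_left_iff.2 fun U hU => ?_
    obtain ⟨N, hN⟩ := eventually_atTop.1 (h hU)
    refine ⟨N, ENat.natCast_lt_top N, fun k hk => ?_⟩
    induction k using ENat.recTopCoe with
    | top => exact mem_of_mem_nhds hU
    | coe m => exact hN m (by exact_mod_cast (Set.mem_Ioi.1 hk).le)
  | coe n =>
    rw [ContinuousAt, ENat.nhds_natCast]
    exact tendsto_pure_nhds f _

theorem fC_natCast (c : ℂ) (p n : ℕ) :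
    fC c p n = ∑ j ∈ range (n + 1), ((p : ℂ) ^ c) ^ j := by
  simp only [fC, ENat.natCast_ne_top, if_false, ENat.toNat_natCast]
  exact sum_congr rfl fun j _ => by rw [mul_comm, cpow_nat_mul]

theorem fC_zero (c : ℂ) (p : ℕ) : fC c p 0 = 1 := by
  simpa using fC_natCast c p 0

section fC

variable {c : ℂ} {p : ℕ}

theorem tendsto_fC_top (hx : ‖(p : ℂ) ^ c‖ < 1) :
    Tendsto (fun n : ℕ => fC c p n) atTop (𝓝 (fC c p ⊤)) := by
  rw [show fC c p ⊤ = _ from if_pos rfl]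
  simpa only [fC_natCast, Function.comp_def] using
    (hasSum_geometric_of_norm_lt_one hx).tendsto_sum_nat.comp (tendsto_add_atTop_nat 1)

theorem continuous_fC (hx : ‖(p : ℂ) ^ c‖ < 1) : Continuous (fC c p) :=
  ENat.continuous_of_tendsto_natCast (tendsto_fC_top hx)

theorem norm_fC_sub_one_le (hx : ‖(p : ℂ) ^ c‖ ≤ 1 / 2) (k : ℕ∞) :
    ‖fC c p k - 1‖ ≤ 2 * ‖(p : ℂ) ^ c‖ := by
  set x := (p : ℂ) ^ c
  have natCast_le (n : ℕ) : ‖fC c p n - 1‖ ≤ 2 * ‖x‖ := by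
    have hgeom : fC c p n - 1 = x * ∑ j ∈ range n, x ^ j := by
      simp only [x, fC_natCast, sum_range_succ', pow_zero, add_sub_cancel_right, mul_sum, pow_succ']
    calc ‖fC c p n - 1‖ ≤ ‖x‖ * ∑ j ∈ range n, ‖x‖ ^ j := by
          rw [hgeom, norm_mul]
          gcongr
          exact (norm_sum_le _ _).trans_eq (by simp [norm_pow])
      _ ≤ ‖x‖ * ∑ j ∈ range n, (1 / 2 : ℝ) ^ j := by gcongr
      _ ≤ ‖x‖ * 2 := by gcongr; exact sum_geometric_two_le n
      _ = 2 * ‖x‖ := mul_comm _ _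
  induction k using ENat.recTopCoe with
  | top =>
    exact le_of_tendsto' (((tendsto_fC_top (by linarith)).sub_const 1).norm) natCast_le
  | coe n => exact natCast_le n

end fC

theorem norm_natCast_cpow_le_half {c : ℂ} (hc : c.re ≤ -1) {p : ℕ} (hp : 2 ≤ p) :
    ‖(p : ℂ) ^ c‖ ≤ 1 / 2 := by
  rw [norm_natCast_cpow_of_pos (by omega)]
  calc (p : ℝ) ^ c.re ≤ 2 ^ c.re :=
        Real.rpow_le_rpow_of_nonpos (by norm_num) (by exact_mod_cast hp) (by linarith)
    _ ≤ 2 ^ (-1 : ℝ) := Real.rpow_le_rpow_of_exponent_le (by norm_num) hc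
    _ = 1 / 2 := by norm_num [Real.rpow_neg_one]

theorem summable_norm_primes_cpow {c : ℂ} (hc : c.re < -1) :
    Summable fun p : Nat.Primes => ‖((p : ℕ) : ℂ) ^ c‖ := by
  refine (Real.summable_nat_rpow.2 hc).comp_injective Subtype.val_injective |>.congr fun p => ?_
  exact (norm_natCast_cpow_of_pos p.prop.pos c).symm

theorem continuous_steinitzValC {c : ℂ} (hc : c.re < -1) : Continuous (steinitzValC c) := by
  have hx (p : Nat.Primes) : ‖((p : ℕ) : ℂ) ^ c‖ ≤ 1 / 2 :=
    norm_natCast_cpow_le_half hc.le p.prop.two_le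
  have hfactor (p : Nat.Primes) : Continuous fun α : Nat.Primes → ℕ∞ => fC c p (α p) :=
    (continuous_fC (by linarith [hx p])).comp (continuous_apply p)
  have hprod := Summable.hasProdUniformlyOn_one_add (K := Set.univ) isCompact_univ
    ((summable_norm_primes_cpow hc).mul_left 2)
    (f := fun (p : Nat.Primes) (α : Nat.Primes → ℕ∞) => fC c p (α p) - 1)
    (.of_forall fun p α _ => norm_fC_sub_one_le (hx p) (α p))
    fun p => ((hfactor p).sub continuous_const).continuousOn
  simp only [add_sub_cancel, hasProdUniformlyOn_univ_iff, hasProdUniformly_iff_tendstoUniformly]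
    at hprod
  exact hprod.continuous (.of_forall fun s => continuous_finsetProd s fun p _ => hfactor p)

section sigmaC

variable {c : ℂ}

theorem sigmaC_one : sigmaC c 1 = 1 := by
  simp [sigmaC]

theorem sigmaC_mul {m n : ℕ} (h : m.Coprime n) :
    sigmaC c (m * n) = sigmaC c m * sigmaC c n := by
  rw [sigmaC, Nat.divisors_mul, mul_def, sum_image h.mul_injOn_divisors, sum_product,
    sigmaC, sigmaC, sum_mul_sum]
  simp only [Nat.cast_mul, natCast_mul_natCast_cpow]

theorem sigmaC_prime_pow {p : ℕ} (hp : p.Prime) (k : ℕ) : sigmaC c (p ^ k) = fC c p k := by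
  rw [sigmaC, Nat.sum_divisors_prime_pow hp, fC_natCast]
  refine sum_congr rfl fun j _ => ?_
  rw [Nat.cast_pow, ← cpow_nat_mul, ← natCast_cpow_natCast_mul, mul_comm]

theorem sigmaC_eq_prod_factorization {n : ℕ} (hn : n ≠ 0) :
    sigmaC c n = n.factorization.prod fun p k => fC c p k := by
  rw [Nat.multiplicative_factorization (sigmaC c) (fun _ _ => sigmaC_mul) sigmaC_one hn]
  exact Finsupp.prod_congr fun p hp => sigmaC_prime_pow (Nat.prime_of_mem_primeFactors hp) _

end sigmaC

def exponentVector (n : ℕ) : Nat.Primes → ℕ∞ := fun p => n.factorization p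

theorem steinitzValC_exponentVector (c : ℂ) {n : ℕ} (hn : n ≠ 0) :
    steinitzValC c (exponentVector n) = sigmaC c n := by
  set g : ℕ → ℂ := fun q => fC c q (n.factorization q)
  have hg : Function.mulSupport g ⊆ n.factorization.support := fun q hq => by
    contrapose! hq
    simp [g, Finsupp.notMem_support_iff.1 hq, fC_zero]
  rw [sigmaC_eq_prod_factorization hn, Finsupp.prod, ← (tprod_eq_prod' hg : ∏' q, g q = _)]
  exact tprod_subtype_eq_of_mulSupport_subset (s := {p : ℕ | p.Prime})
    (hg.trans fun q hq => Nat.prime_of_mem_primeFactors hq)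

theorem Nat.factorization_prod_primes_pow (S : Finset Nat.Primes) (e : Nat.Primes → ℕ)
    (q : Nat.Primes) :
    (∏ p ∈ S, (p : ℕ) ^ e p).factorization q = if q ∈ S then e q else 0 := by
  rw [Nat.factorization_prod fun p _ => pow_ne_zero _ p.prop.ne_zero, Finsupp.finsetSum_apply]
  simp_rw [fun p : Nat.Primes => p.prop.factorization_pow, Finsupp.single_apply,
    Nat.Primes.coe_nat_inj]
  exact sum_ite_eq' S q e

theorem dense_range_exponentVector : Dense (Set.range fun n : ℕ+ => exponentVector n) := by
  intro α
  let S (m : ℕ) : Finset Nat.Primes := (range m).subtype Nat.Prime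
  let N (m : ℕ) : ℕ := ∏ p ∈ S m, (p : ℕ) ^ (min (α p) m).toNat
  have hN (m : ℕ) : 0 < N m := prod_pos fun p _ => pow_pos p.prop.pos _
  refine mem_closure_of_tendsto (f := fun m => exponentVector (N m)) (b := atTop) ?_
    (.of_forall fun m => ⟨⟨N m, hN m⟩, rfl⟩)
  refine tendsto_pi_nhds.2 fun q => ?_
  have hmin : Tendsto (fun m : ℕ => min (α q) m) atTop (𝓝 (α q)) := by
    simpa using tendsto_const_nhds.min ENat.tendsto_natCast_nhds_top
  refine hmin.congr' ((eventually_gt_atTop (q : ℕ)).mono fun m hm => ?_)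
  show _ = ((N m).factorization q : ℕ∞)
  rw [Nat.factorization_prod_primes_pow,
    if_pos (show q ∈ S m from mem_subtype.2 (mem_range.2 hm)),
    ENat.natCast_toNat (min_lt_of_right_lt (ENat.natCast_lt_top m)).ne]

/-- The closure of `{σ_c(n) : n ∈ ℕ+}` equals `{Σ_c(α) : α : Primes → ℕ ∪ {∞}}`
    when `Re(c) < -1`. -/
theorem statement0 (c : ℂ) (hc : c.re < -1) :
    closure (Set.range fun n : ℕ+ => sigmaC c (n : ℕ)) =
      Set.range (steinitzValC c) := by
  have hcont := continuous_steinitzValC hc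
  have hrange : (Set.range fun n : ℕ+ => sigmaC c (n : ℕ)) =
      steinitzValC c '' Set.range fun n : ℕ+ => exponentVector n := by
    rw [← Set.range_comp]
    exact congrArg Set.range (funext fun n => (steinitzValC_exponentVector c n.ne_zero).symm)
  rw [hrange, hcont.isClosedMap.closure_image_eq_of_continuous hcont,
    dense_range_exponentVector.closure_eq, Set.image_univ]
end

section
/- Let r ≥ 2 be a real number, let q be an r-mighty prime, and let p be a prime with p > q². Suppose α is a function from the set of primes to ℕ ∪ {∞} (encoding a Steinitz number) such that σ_{-r}(q) < Σ_{-r}(α) < σ_{-r}(q·p). Then α(q) ≥ 1 and α(q') = 0 for every prime q' < q; that is, q divides the Steinitz number encoded by α and q is its smallest prime factor. -/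
open scoped BigOperators

/-- The divisor function `σ_{-r}(n) = ∑_{d ∣ n} d^{-r}`. -/
noncomputable def sigmaNeg (r : ℝ) (n : ℕ) : ℝ := ∑ d ∈ n.divisors, (d : ℝ) ^ (-r)

/-- `u_p(r) = ∏_{q prime, q > p} (1 - q^{-r})⁻¹`. -/
noncomputable def uAfter (r : ℝ) (p : ℕ) : ℝ :=
  ∏' q : {q : Nat.Primes // p < (q : ℕ)}, (1 - ((q.1 : ℕ) : ℝ) ^ (-r))⁻¹

/-- A prime `p` is `r`-mighty if `1 + p^{-r} > ∏_{q prime, q > p} (1 - q^{-r})⁻¹`. -/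
def Mighty (r : ℝ) (p : ℕ) : Prop := uAfter r p < 1 + (p : ℝ) ^ (-r)

/-- `f_p(k) = σ_{-r}(p^k)` for finite `k`, and `f_p(∞) = (1 - p^{-r})⁻¹`. -/
noncomputable def fReal (r : ℝ) (p : ℕ) (k : ℕ∞) : ℝ :=
  if k = ⊤ then (1 - (p : ℝ) ^ (-r))⁻¹
  else ∑ j ∈ Finset.range (k.toNat + 1), ((p : ℝ) ^ (-r)) ^ j

/-- The value of `σ_{-r}` on the Steinitz number encoded by `α`. -/
noncomputable def steinitzVal (r : ℝ) (α : Nat.Primes → ℕ∞) : ℝ :=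
  ∏' p : Nat.Primes, fReal r (p : ℕ) (α p)

/-- The topological closure of the image `σ_{-r}(ℕ)` in `ℝ`. -/
noncomputable def sigmaClosure (r : ℝ) : Set ℝ :=
  closure (Set.range fun n : ℕ+ => sigmaNeg r (n : ℕ))

/-!
Write `t = q^{-r}` and `u = p^{-r}`, so that `σ_{-r}(q) = 1 + t` and `σ_{-r}(qp) = (1 + t)(1 + u)`.
Every local factor `f_ℓ(α(ℓ))` is at least `1`, so `Σ_{-r}(α)` dominates each of them. If a prime
`q' < q` had `α(q') ≥ 1`, its factor alone would be at least `1 + q'^{-r}`, which already exceeds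
`(1 + t)(1 + u)`: `p > q²` gives `u ≤ t²`, and `r ≥ 2` makes `q^{2-r} ≤ q'^{2-r}`. So no prime below
`q` divides `α`; if `q` did not either, every factor would be bounded by the corresponding factor
of `u_q(r)`, and `Σ_{-r}(α) ≤ u_q(r) < 1 + t` by mightiness.
-/

open Finset

section RealProducts

variable {ι : Type*} {f g : ι → ℝ} {a b : ℝ}

lemma prod_le_hasProd_of_one_le (hf : HasProd f a) (h1 : ∀ i, 1 ≤ f i) (s : Finset ι) :
    ∏ i ∈ s, f i ≤ a :=
  (prod_mono_set_of_one_le h1).ge_of_tendsto hf s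

lemma le_hasProd_of_one_le (hf : HasProd f a) (h1 : ∀ i, 1 ≤ f i) (i : ι) : f i ≤ a := by
  simpa using prod_le_hasProd_of_one_le hf h1 {i}

lemma hasProd_le_of_nonneg (hf : HasProd f a) (hg : HasProd g b) (h0 : ∀ i, 0 ≤ f i)
    (hfg : ∀ i, f i ≤ g i) : a ≤ b :=
  le_of_tendsto_of_tendsto' hf hg fun _ ↦ prod_le_prod (fun i _ ↦ h0 i) fun i _ ↦ hfg i

lemma multipliable_inv_one_sub {x : ι → ℝ} (hx : Summable x) (hx1 : ∀ i, x i < 1) :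
    Multipliable fun i ↦ (1 - x i)⁻¹ := by
  have hpos : ∀ i, 0 < 1 + -x i := fun i ↦ by linarith [hx1 i]
  have hprod := Real.hasProd_of_hasSum_log hpos
    (Real.summable_log_one_add_of_summable hx.neg).hasSum
  simpa only [sub_eq_add_neg] using (hprod.inv₀ (Real.exp_pos _).ne').multipliable

end RealProducts

lemma natCast_rpow_neg_lt_one {n : ℕ} (hn : 1 < n) {r : ℝ} (hr : 0 < r) : (n : ℝ) ^ (-r) < 1 :=
  Real.rpow_lt_one_of_one_lt_of_neg (by exact_mod_cast hn) (by linarith)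

section LocalFactor

variable {r : ℝ} {p : ℕ}

lemma fReal_top : fReal r p ⊤ = (1 - (p : ℝ) ^ (-r))⁻¹ := if_pos rfl

lemma fReal_coe (n : ℕ) : fReal r p n = ∑ j ∈ range (n + 1), ((p : ℝ) ^ (-r)) ^ j := by
  simp [fReal]

lemma fReal_zero : fReal r p 0 = 1 := by simpa using fReal_coe (r := r) (p := p) 0

lemma fReal_one : fReal r p 1 = 1 + (p : ℝ) ^ (-r) := by
  simpa [sum_range_succ, add_comm] using fReal_coe (r := r) (p := p) 1

lemma fReal_mono (hx : (p : ℝ) ^ (-r) < 1) : Monotone (fReal r p) := by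
  have hx0 : 0 ≤ (p : ℝ) ^ (-r) := Real.rpow_nonneg (Nat.cast_nonneg p) _
  intro k l hkl
  induction l using ENat.recTopCoe with
  | top =>
    induction k using ENat.recTopCoe with
    | top => exact le_rfl
    | coe m =>
      rw [fReal_coe, fReal_top]
      exact sum_le_hasSum _ (fun j _ ↦ pow_nonneg hx0 j) (hasSum_geometric_of_lt_one hx0 hx)
  | coe n =>
    lift k to ℕ using ne_top_of_le_ne_top (ENat.natCast_ne_top n) hkl
    rw [fReal_coe, fReal_coe]
    exact sum_le_sum_of_subset_of_nonneg (range_subset_range.mpr (by simpa using hkl))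
      fun j _ _ ↦ pow_nonneg hx0 j

lemma one_le_fReal (hx : (p : ℝ) ^ (-r) < 1) (k : ℕ∞) : 1 ≤ fReal r p k :=
  fReal_zero.symm.trans_le (fReal_mono hx bot_le)

lemma one_add_rpow_neg_le_fReal (hx : (p : ℝ) ^ (-r) < 1) {k : ℕ∞} (hk : k ≠ 0) :
    1 + (p : ℝ) ^ (-r) ≤ fReal r p k :=
  fReal_one.symm.trans_le (fReal_mono hx (Order.one_le_iff_ne_zero.mpr hk))

lemma fReal_le_inv_one_sub (hx : (p : ℝ) ^ (-r) < 1) (k : ℕ∞) :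
    fReal r p k ≤ (1 - (p : ℝ) ^ (-r))⁻¹ :=
  (fReal_mono hx le_top).trans_eq fReal_top

end LocalFactor

section SteinitzValue

variable {r : ℝ} {α : Nat.Primes → ℕ∞}

lemma multipliable_of_one_lt_steinitzVal (h : 1 < steinitzVal r α) :
    Multipliable fun p : Nat.Primes ↦ fReal r p (α p) := by
  by_contra hM
  rw [steinitzVal, tprod_eq_one_of_not_multipliable hM] at h
  exact h.false

lemma fReal_le_steinitzVal (hr : 0 < r) (hM : Multipliable fun p : Nat.Primes ↦ fReal r p (α p))
    (p : Nat.Primes) : fReal r p (α p) ≤ steinitzVal r α :=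
  le_hasProd_of_one_le hM.hasProd
    (fun p ↦ one_le_fReal (natCast_rpow_neg_lt_one p.2.one_lt hr) _) p

lemma hasProd_uAfter (hr : 1 < r) (q : ℕ) :
    HasProd ({p : Nat.Primes | q < (p : ℕ)}.mulIndicator fun p ↦ (1 - ((p : ℕ) : ℝ) ^ (-r))⁻¹)
      (uAfter r q) := by
  rw [← hasProd_subtype_iff_mulIndicator]
  exact (multipliable_inv_one_sub ((Nat.Primes.summable_rpow.mpr (by linarith)).subtype _)
    fun p ↦ natCast_rpow_neg_lt_one p.1.2.one_lt (by linarith)).hasProd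

lemma steinitzVal_le_uAfter (hr : 1 < r) {q : ℕ} (hα : ∀ p : Nat.Primes, (p : ℕ) ≤ q → α p = 0)
    (hM : Multipliable fun p : Nat.Primes ↦ fReal r p (α p)) : steinitzVal r α ≤ uAfter r q := by
  have hx (p : Nat.Primes) := natCast_rpow_neg_lt_one p.2.one_lt (zero_lt_one.trans hr)
  refine hasProd_le_of_nonneg hM.hasProd (hasProd_uAfter hr q)
    (fun p ↦ zero_le_one.trans (one_le_fReal (hx p) _)) fun p ↦ ?_
  by_cases hp : q < p
  · rw [Set.mulIndicator_of_mem (by exact hp)]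
    exact fReal_le_inv_one_sub (hx p) _
  · rw [Set.mulIndicator_of_notMem (by exact hp), hα p (not_lt.mp hp), fReal_zero]

end SteinitzValue

lemma sigmaNeg_mul {m n : ℕ} (hmn : m.Coprime n) (r : ℝ) :
    sigmaNeg r (m * n) = sigmaNeg r m * sigmaNeg r n := by
  simp only [sigmaNeg, hmn.divisors_mul, sum_map, sum_mul_sum]
  refine (sum_attach _ fun d : ℕ × ℕ ↦ ((d.1 * d.2 : ℕ) : ℝ) ^ (-r)).trans ?_
  simp [sum_product, Real.mul_rpow]

lemma sigmaNeg_prime (r : ℝ) {p : ℕ} (hp : p.Prime) : sigmaNeg r p = 1 + (p : ℝ) ^ (-r) := by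
  rw [sigmaNeg, hp.divisors, sum_pair hp.one_lt.ne]
  simp

lemma one_add_mul_one_add_le {a b t u s : ℝ} (hb : 2 ≤ b) (hba : b + 1 ≤ a) (ht : 0 ≤ t)
    (hta : t * a ^ 2 ≤ 1) (hu : u ≤ t ^ 2) (hts : t * a ^ 2 ≤ s * b ^ 2) :
    (1 + t) * (1 + u) ≤ 1 + s := by
  have ht4 : t ≤ 1 / 4 := by nlinarith
  have hba2 : b ^ 2 + 2 ≤ a ^ 2 := by nlinarith
  have htb : t * b ^ 2 ≤ t * a ^ 2 := mul_le_mul_of_nonneg_left (by nlinarith) ht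
  have hfactor : (1 + t + t ^ 2) * b ^ 2 ≤ a ^ 2 := by nlinarith
  have hts' : t * (1 + t + t ^ 2) ≤ s := by
    refine le_of_mul_le_mul_right ?_ (by positivity : (0 : ℝ) < b ^ 2)
    calc t * (1 + t + t ^ 2) * b ^ 2 ≤ t * a ^ 2 := by
          rw [mul_assoc]; exact mul_le_mul_of_nonneg_left hfactor ht
      _ ≤ s * b ^ 2 := hts
  nlinarith

lemma rpow_neg_mul_sq {x : ℝ} (hx : 0 < x) (r : ℝ) : x ^ (-r) * x ^ 2 = x ^ (2 - r) := by
  rw [← Real.rpow_natCast, ← Real.rpow_add hx]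
  ring_nf

lemma sigmaNeg_mul_prime_le {r : ℝ} (hr : 2 ≤ r) {q q' p : ℕ} (hq : q.Prime) (hq' : q'.Prime)
    (hp : p.Prime) (hq'q : q' < q) (hpq : q ^ 2 < p) :
    sigmaNeg r (q * p) ≤ 1 + (q' : ℝ) ^ (-r) := by
  have hqp : q ≠ p := (lt_of_le_of_lt (Nat.le_self_pow two_ne_zero q) hpq).ne
  rw [sigmaNeg_mul ((Nat.coprime_primes hq hp).mpr hqp), sigmaNeg_prime r hq, sigmaNeg_prime r hp]
  have hq0 : (0 : ℝ) < q := by exact_mod_cast hq.pos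
  have hq'0 : (0 : ℝ) < q' := by exact_mod_cast hq'.pos
  refine one_add_mul_one_add_le (a := q) (b := q') (by exact_mod_cast hq'.two_le)
    (by exact_mod_cast hq'q) (Real.rpow_nonneg hq0.le _) ?_ ?_ ?_
  · rw [rpow_neg_mul_sq hq0]
    exact Real.rpow_le_one_of_one_le_of_nonpos (by exact_mod_cast hq.one_le) (by linarith)
  · rw [Real.rpow_pow_comm hq0.le]
    exact Real.rpow_le_rpow_of_nonpos (by positivity) (by exact_mod_cast hpq.le) (by linarith)
  · rw [rpow_neg_mul_sq hq0, rpow_neg_mul_sq hq'0]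
    exact Real.rpow_le_rpow_of_nonpos hq'0 (by exact_mod_cast hq'q.le) (by linarith)

theorem statement1 (r : ℝ) (hr : 2 ≤ r) (q : ℕ) (hq : q.Prime) (hqm : Mighty r q)
    (p : ℕ) (hp : p.Prime) (hpq : q ^ 2 < p)
    (α : Nat.Primes → ℕ∞)
    (h1 : sigmaNeg r q < steinitzVal r α)
    (h2 : steinitzVal r α < sigmaNeg r (q * p)) :
    1 ≤ α ⟨q, hq⟩ ∧ ∀ q' : Nat.Primes, (q' : ℕ) < q → α q' = 0 := by
  have hr0 : 0 < r := by linarith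
  rw [sigmaNeg_prime r hq] at h1
  have hM := multipliable_of_one_lt_steinitzVal
    (lt_of_le_of_lt (le_add_of_nonneg_right (Real.rpow_nonneg (Nat.cast_nonneg q) _)) h1)
  have hsmall : ∀ q' : Nat.Primes, (q' : ℕ) < q → α q' = 0 := by
    intro q' hq'q
    by_contra hne
    have hx := natCast_rpow_neg_lt_one q'.2.one_lt hr0
    refine h2.not_ge ?_
    calc sigmaNeg r (q * p) ≤ 1 + ((q' : ℕ) : ℝ) ^ (-r) :=
          sigmaNeg_mul_prime_le hr hq q'.2 hp hq'q hpq
      _ ≤ fReal r q' (α q') := one_add_rpow_neg_le_fReal hx hne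
      _ ≤ steinitzVal r α := fReal_le_steinitzVal hr0 hM q'
  refine ⟨Order.one_le_iff_ne_zero.mpr fun hαq ↦ ?_, hsmall⟩
  have hle_q : ∀ q' : Nat.Primes, (q' : ℕ) ≤ q → α q' = 0 := fun q' hq' ↦
    hq'.lt_or_eq.elim (hsmall q') fun h ↦ (congrArg α (Subtype.ext h)).trans hαq
  exact hqm.not_ge (h1.le.trans (steinitzVal_le_uAfter (by linarith) hle_q hM))
end

section
/- Let r > 1 be a real number and let n be a positive integer such that p^k ≤ r − 1 whenever p is a prime, k ≥ 1, and p^k divides n. Then σ_{-r}(n) is the right endpoint of a gap of cl(σ_{-r}(ℕ)): there exists ε > 0 such that the open interval (σ_{-r}(n) − ε, σ_{-r}(n)) is disjoint from cl(σ_{-r}(ℕ)), while σ_{-r}(n) ∈ cl(σ_{-r}(ℕ)). -/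
open scoped BigOperators

/-! Compare `σ_{-r}(n)` with `σ_{-r}(m)` through the divisors the two numbers do not share. The
least divisor of `n` not dividing `m` is a prime power, hence at most `r - 1`. For `1 ≤ d ≤ r - 1`
the telescoping bound `(r - 1) ∑_{e > d} e^{-r} < d^{1 - r} ≤ (r - 1) d^{-r}` shows that `d^{-r}`
beats every finite sum of `e^{-r}` over `e > d`, by a margin independent of the sum. So whichever
of `n`, `m` owns the least unshared divisor has the larger value, and when it is `n` it wins by at
least the least of these margins over `d ≤ n`, which leaves a gap below `σ_{-r}(n)`. -/

open Filter Topology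

section RpowTail

variable {r : ℝ}

theorem sub_one_mul_add_one_rpow_neg_lt (hr : 1 < r) {b : ℝ} (hb : 0 < b) :
    (r - 1) * (b + 1) ^ (-r) < b ^ (1 - r) - (b + 1) ^ (1 - r) := by
  obtain ⟨c, ⟨hbc, hcb⟩, hslope⟩ := exists_hasDerivAt_eq_slope (fun x : ℝ => x ^ (1 - r))
    (fun x => (1 - r) * x ^ (1 - r - 1)) (lt_add_one b)
    (continuousOn_id.rpow_const fun x hx => Or.inl (hb.trans_le hx.1).ne')
    (fun x hx => Real.hasDerivAt_rpow_const (Or.inl (hb.trans hx.1).ne'))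
  have hc : (b + 1) ^ (-r) < c ^ (-r) :=
    Real.rpow_lt_rpow_of_neg (hb.trans hbc) hcb (by linarith)
  rw [add_sub_cancel_left, div_one, sub_sub_cancel_left] at hslope
  nlinarith

theorem sub_one_mul_sum_Ioc_rpow_neg_le (hr : 1 < r) {a : ℕ} (ha : 0 < a) {N : ℕ} (haN : a ≤ N) :
    (r - 1) * ∑ e ∈ Finset.Ioc a N, (e : ℝ) ^ (-r) ≤ (a : ℝ) ^ (1 - r) - (N : ℝ) ^ (1 - r) := by
  induction N, haN using Nat.le_induction with
  | base => simp
  | succ N haN ih =>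
    have hstep := sub_one_mul_add_one_rpow_neg_lt hr (b := N) (by norm_cast; omega)
    rw [Finset.sum_Ioc_succ_top haN, mul_add]
    push_cast
    linarith

theorem sub_one_mul_sum_rpow_neg_le (hr : 1 < r) {a : ℕ} (ha : 0 < a) {F : Finset ℕ}
    (hF : ∀ e ∈ F, a < e) : (r - 1) * ∑ e ∈ F, (e : ℝ) ^ (-r) ≤ (a : ℝ) ^ (1 - r) := by
  have hsub : F ⊆ Finset.Ioc a (a + F.sup id) := fun e he =>
    Finset.mem_Ioc.2 ⟨hF e he, (Finset.le_sup (f := id) he).trans (Nat.le_add_left _ _)⟩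
  calc (r - 1) * ∑ e ∈ F, (e : ℝ) ^ (-r)
      ≤ (r - 1) * ∑ e ∈ Finset.Ioc a (a + F.sup id), (e : ℝ) ^ (-r) := by
        gcongr
    _ ≤ (a : ℝ) ^ (1 - r) - ((a + F.sup id : ℕ) : ℝ) ^ (1 - r) :=
        sub_one_mul_sum_Ioc_rpow_neg_le hr ha (Nat.le_add_right _ _)
    _ ≤ (a : ℝ) ^ (1 - r) := sub_le_self _ (by positivity)

-- Splitting off `e = a + 1` keeps one step of the telescoping strict, which makes the gap positive.
theorem sub_one_mul_sum_rpow_neg_le_add (hr : 1 < r) {a : ℕ} {F : Finset ℕ}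
    (hF : ∀ e ∈ F, a < e) :
    (r - 1) * ∑ e ∈ F, (e : ℝ) ^ (-r) ≤ (r - 1) * (a + 1 : ℝ) ^ (-r) + (a + 1 : ℝ) ^ (1 - r) := by
  rw [← Finset.sum_filter_add_sum_filter_not F (· = a + 1), mul_add]
  gcongr
  · calc ∑ e ∈ F with e = a + 1, (e : ℝ) ^ (-r) ≤ ∑ e ∈ {a + 1}, (e : ℝ) ^ (-r) :=
          Finset.sum_le_sum_of_subset_of_nonneg (fun e he => by simp_all)
            fun e _ _ => by positivity
      _ = (a + 1 : ℝ) ^ (-r) := by simp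
  · exact_mod_cast sub_one_mul_sum_rpow_neg_le hr a.succ_pos fun e he => by
      simp only [Finset.mem_filter] at he; have := hF e he.1; omega

theorem eventually_sum_rpow_neg_le_sub {d : ℕ} (hd : 0 < d) (hdr : (d : ℝ) ≤ r - 1) :
    ∀ᶠ ε in 𝓝[>] (0 : ℝ), ∀ F : Finset ℕ, (∀ e ∈ F, d < e) →
      ∑ e ∈ F, (e : ℝ) ^ (-r) ≤ (d : ℝ) ^ (-r) - ε := by
  have hd' : (1 : ℝ) ≤ d := by exact_mod_cast hd
  have hr : 1 < r := by linarith
  set B := (r - 1) * (d + 1 : ℝ) ^ (-r) + (d + 1 : ℝ) ^ (1 - r)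
  have hB : B < (r - 1) * (d : ℝ) ^ (-r) :=
    calc B < (d : ℝ) ^ (1 - r) := by
          have := sub_one_mul_add_one_rpow_neg_lt hr (b := d) (by positivity); linarith
      _ = d * (d : ℝ) ^ (-r) := by
          rw [sub_eq_add_neg, Real.rpow_add (by positivity), Real.rpow_one]
      _ ≤ (r - 1) * (d : ℝ) ^ (-r) := by gcongr
  have hgap : 0 < (d : ℝ) ^ (-r) - B / (r - 1) := by
    rw [sub_pos, div_lt_iff₀' (by linarith)]; exact hB
  filter_upwards [nhdsWithin_le_nhds (gt_mem_nhds hgap)] with ε hε F hF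
  have := sub_one_mul_sum_rpow_neg_le_add hr hF
  rw [← le_div_iff₀' (by linarith)] at this
  linarith

end RpowTail

theorem Finset.sum_le_sum_sub_of_mem_sdiff {α : Type*} [DecidableEq α] {w : α → ℝ}
    (hw : ∀ x, 0 ≤ w x) {A B : Finset α} {x : α} {ε : ℝ} (hx : x ∈ B \ A)
    (hAB : ∑ y ∈ A \ B, w y ≤ w x - ε) : ∑ y ∈ A, w y ≤ ∑ y ∈ B, w y - ε := by
  have hx_le : w x ≤ ∑ y ∈ B \ A, w y := Finset.single_le_sum (fun y _ => hw y) hx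
  have := Finset.sum_sdiff_sub_sum_sdiff (f := w) (s₁ := B) (s₂ := A)
  linarith

theorem Nat.isPrimePow_min'_divisors_sdiff {n m : ℕ} (hm : m ≠ 0)
    (h : (n.divisors \ m.divisors).Nonempty) :
    IsPrimePow ((n.divisors \ m.divisors).min' h) := by
  set d := (n.divisors \ m.divisors).min' h
  obtain ⟨hdn, hdm⟩ := Finset.mem_sdiff.1 (Finset.min'_mem _ h)
  obtain ⟨p, k, hp, hpkd, hpkm⟩ : ∃ p k, p.Prime ∧ p ^ k ∣ d ∧ ¬ p ^ k ∣ m := by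
    by_contra! hcon
    exact hdm (Nat.mem_divisors.2 ⟨(Nat.dvd_iff_prime_pow_dvd_dvd m d).2 hcon, hm⟩)
  have hk : 0 < k := Nat.pos_of_ne_zero fun hk => hpkm (by simp [hk])
  have hpk : p ^ k ∈ n.divisors \ m.divisors := Finset.mem_sdiff.2
    ⟨Nat.mem_divisors.2 ⟨hpkd.trans (Nat.dvd_of_mem_divisors hdn), Nat.ne_zero_of_mem_divisors hdn⟩,
      fun h' => hpkm (Nat.dvd_of_mem_divisors h')⟩
  refine (isPrimePow_nat_iff d).2 ⟨p, k, hp, hk, ?_⟩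
  exact le_antisymm (Nat.le_of_dvd (Nat.pos_of_mem_divisors hdn) hpkd) (Finset.min'_le _ _ hpk)

theorem sigmaNeg_le_or_le_sub_of_forall_sum_rpow_neg_le {r ε : ℝ} {n m : ℕ} (hε : 0 ≤ ε)
    (hm : m ≠ 0)
    (h : ∀ p k : ℕ, p.Prime → 1 ≤ k → p ^ k ∣ n → ((p ^ k : ℕ) : ℝ) ≤ r - 1)
    (hgap : ∀ d ∈ Finset.Icc 1 n, (d : ℝ) ≤ r - 1 →
      ∀ F : Finset ℕ, (∀ e ∈ F, d < e) → ∑ e ∈ F, (e : ℝ) ^ (-r) ≤ (d : ℝ) ^ (-r) - ε) :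
    sigmaNeg r n ≤ sigmaNeg r m ∨ sigmaNeg r m ≤ sigmaNeg r n - ε := by
  have hw : ∀ e : ℕ, 0 ≤ (e : ℝ) ^ (-r) := fun e => by positivity
  rcases (n.divisors \ m.divisors).eq_empty_or_nonempty with hnm | hnm
  · exact .inl <| Finset.sum_le_sum_of_subset_of_nonneg (Finset.sdiff_eq_empty_iff_subset.1 hnm)
      fun e _ _ => hw e
  set d := (n.divisors \ m.divisors).min' hnm
  obtain ⟨hdn, hdm⟩ := Finset.mem_sdiff.1 (Finset.min'_mem _ hnm)
  have hdr : (d : ℝ) ≤ r - 1 := by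
    obtain ⟨p, k, hp, hk, hpk⟩ :=
      (isPrimePow_nat_iff d).1 (Nat.isPrimePow_min'_divisors_sdiff hm hnm)
    exact hpk ▸ h p k hp hk (hpk ▸ Nat.dvd_of_mem_divisors hdn)
  have hdIcc : d ∈ Finset.Icc 1 n :=
    Finset.mem_Icc.2 ⟨Nat.pos_of_mem_divisors hdn, Nat.divisor_le hdn⟩
  by_cases hmn : ∃ e ∈ m.divisors \ n.divisors, e ≤ d
  · obtain ⟨e, he, hed⟩ := hmn
    have hed : e < d := hed.lt_of_ne (ne_of_mem_of_not_mem (Finset.mem_sdiff.1 he).1 hdm)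
    have heIcc : e ∈ Finset.Icc 1 n := Finset.mem_Icc.2
      ⟨Nat.pos_of_mem_divisors (Finset.mem_sdiff.1 he).1, hed.le.trans (Finset.mem_Icc.1 hdIcc).2⟩
    have her : (e : ℝ) ≤ r - 1 := le_trans (by exact_mod_cast hed.le) hdr
    have := Finset.sum_le_sum_sub_of_mem_sdiff hw he
      (hgap e heIcc her _ fun x hx => hed.trans_le (Finset.min'_le _ _ hx))
    exact .inl (by unfold sigmaNeg; linarith)
  · exact .inr <| Finset.sum_le_sum_sub_of_mem_sdiff hw (Finset.min'_mem _ hnm)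
      (hgap d hdIcc hdr _ fun e he => lt_of_not_ge fun hed => hmn ⟨e, he, hed⟩)

theorem statement11_general (r : ℝ) (n : ℕ) (hn : 0 < n)
    (h : ∀ p k : ℕ, p.Prime → 1 ≤ k → p ^ k ∣ n → ((p ^ k : ℕ) : ℝ) ≤ r - 1) :
    sigmaNeg r n ∈ sigmaClosure r ∧
      ∃ ε > 0, Set.Ioo (sigmaNeg r n - ε) (sigmaNeg r n) ∩ sigmaClosure r = ∅ := by
  refine ⟨subset_closure ⟨⟨n, hn⟩, rfl⟩, ?_⟩
  have hgaps : ∀ᶠ ε in 𝓝[>] (0 : ℝ), ∀ d ∈ Finset.Icc 1 n, (d : ℝ) ≤ r - 1 →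
      ∀ F : Finset ℕ, (∀ e ∈ F, d < e) → ∑ e ∈ F, (e : ℝ) ^ (-r) ≤ (d : ℝ) ^ (-r) - ε :=
    (eventually_all_finset _).2 fun d hd => eventually_imp_distrib_left.2 fun hdr =>
      eventually_sum_rpow_neg_le_sub (Finset.mem_Icc.1 hd).1 hdr
  obtain ⟨ε, hgap, hε⟩ := (hgaps.and self_mem_nhdsWithin).exists
  refine ⟨ε, hε, Set.disjoint_iff_inter_eq_empty.1 (Disjoint.closure_right ?_ isOpen_Ioo)⟩
  rw [Set.disjoint_right]
  rintro _ ⟨m, rfl⟩ ⟨hlo, hhi⟩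
  rcases sigmaNeg_le_or_le_sub_of_forall_sum_rpow_neg_le hε.le m.ne_zero h hgap with hle | hle
  <;> linarith

theorem statement11 (r : ℝ) (hr : 1 < r) (n : ℕ) (hn : 0 < n)
    (h : ∀ p k : ℕ, p.Prime → 1 ≤ k → p ^ k ∣ n → ((p ^ k : ℕ) : ℝ) ≤ r - 1) :
    sigmaNeg r n ∈ sigmaClosure r ∧
      ∃ ε > 0, Set.Ioo (sigmaNeg r n - ε) (sigmaNeg r n) ∩ sigmaClosure r = ∅ :=
  statement11_general r n hn h
end

section
/- Let r ≥ 2 be a real number, let n be a positive integer such that p^k ≤ r − 1 whenever p is a prime, k ≥ 1, and p^k divides n, and set ε = min over positive integers d with d ≤ r − 1 of (d^{-r} − ∑_{k = d+1}^{∞} k^{-r}). Then ε > 0, and for every positive integer m, either σ_{-r}(m) ≥ σ_{-r}(n) or σ_{-r}(m) ≤ σ_{-r}(n) − ε. -/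
open scoped BigOperators

/-!
Let `d` be the least divisor of `n` that does not divide `m`. Some prime power `p ^ k ∣ d` does
not divide `m`, so minimality forces `d = p ^ k`, whence `d ≤ r - 1`. If every divisor of `m`
missing from `n` exceeds `d`, then `σ_{-r}(n) - σ_{-r}(m) ≥ d^{-r} - ∑_{k > d} k^{-r} ≥ ε`;
otherwise the same estimate at such a divisor `e < d` of `m` gives `σ_{-r}(m) ≥ σ_{-r}(n) + ε`.
That `∑_{k > d} k^{-r} < d^{-r}` for `d ≤ r - 1` comes from comparing `k^{-r}` with
`∫_{k-1}^{k} t^{-r} dt`: the tail is below `d^{1-r} / (r - 1) ≤ d^{-r}`.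
-/

open Real Filter Topology

lemma rpow_neg_lt_rpow_one_sub_sub {r t : ℝ} (hr : 1 < r) (ht : 1 < t) :
    (r - 1) * t ^ (-r) < (t - 1) ^ (1 - r) - t ^ (1 - r) := by
  obtain ⟨c, ⟨hc₀, hct⟩, hc⟩ := exists_hasDerivAt_eq_slope (fun x : ℝ => x ^ (1 - r))
    (fun x => (1 - r) * x ^ (1 - r - 1)) (by linarith : t - 1 < t)
    (continuousOn_id.rpow_const fun x hx => Or.inl (by linarith [hx.1] : (0 : ℝ) < x).ne')
    (fun x hx => hasDerivAt_rpow_const (Or.inl (by linarith [hx.1] : (0 : ℝ) < x).ne'))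
  rw [show t - (t - 1) = 1 by ring, div_one, show 1 - r - 1 = -r by ring] at hc
  have : t ^ (-r) < c ^ (-r) := rpow_lt_rpow_of_neg (by linarith) hct (by linarith)
  nlinarith

lemma tsum_subtype_lt_eq_tsum_add {M : Type*} [AddCommMonoid M] [TopologicalSpace M]
    (f : ℕ → M) (d : ℕ) :
    ∑' m : {m : ℕ // d < m}, f m = ∑' k : ℕ, f (k + (d + 1)) :=
  (Equiv.tsum_eq (show ℕ ≃ {m : ℕ // d < m} from
    { toFun := fun k => ⟨k + (d + 1), by omega⟩
      invFun := fun m => m - (d + 1)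
      left_inv := fun k => by simp
      right_inv := fun m => Subtype.ext (by have := m.2; simp only; omega) })
    (fun m : {m : ℕ // d < m} => f m)).symm

lemma tsum_rpow_neg_gt_lt {r : ℝ} (hr : 1 < r) {d : ℕ} (hd : 0 < d) :
    ∑' m : {m : ℕ // d < m}, ((m : ℕ) : ℝ) ^ (-r) < (d : ℝ) ^ (1 - r) / (r - 1) := by
  set H : ℕ → ℝ := fun k => ((k + d : ℕ) : ℝ) ^ (1 - r) / (r - 1) with hH
  have hstep : ∀ k, ((k + (d + 1) : ℕ) : ℝ) ^ (-r) < H k - H (k + 1) := by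
    intro k
    have ht : (1 : ℝ) < ((k + (d + 1) : ℕ) : ℝ) := by norm_cast; omega
    have hprev : ((k + (d + 1) : ℕ) : ℝ) - 1 = ((k + d : ℕ) : ℝ) := by push_cast; ring
    have := rpow_neg_lt_rpow_one_sub_sub hr ht
    rw [hprev] at this
    simp only [H, show k + 1 + d = k + (d + 1) by ring]
    rw [← sub_div, lt_div_iff₀ (by linarith)]
    linarith
  have hlim : Tendsto H atTop (𝓝 0) := by
    have := ((tendsto_rpow_neg_atTop (by linarith : 0 < r - 1)).comp
      (tendsto_natCast_atTop_atTop.comp (tendsto_add_atTop_nat d))).div_const (r - 1)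
    simpa [hH, Function.comp_def, show -(r - 1) = 1 - r by ring] using this
  have htele : HasSum (fun k => H k - H (k + 1)) (H 0) := by
    rw [hasSum_iff_tendsto_nat_of_nonneg fun k => (rpow_nonneg (Nat.cast_nonneg _) _).trans
      (hstep k).le]
    simp_rw [Finset.sum_range_sub']
    simpa using tendsto_const_nhds.sub hlim
  have hsum : Summable fun k : ℕ => ((k + (d + 1) : ℕ) : ℝ) ^ (-r) :=
    (summable_nat_add_iff (d + 1)).2 (summable_nat_rpow.2 (by linarith))
  rw [tsum_subtype_lt_eq_tsum_add (fun m : ℕ => (m : ℝ) ^ (-r)),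
    show (d : ℝ) ^ (1 - r) / (r - 1) = H 0 by simp [hH]]
  exact hasSum_lt (fun k => (hstep k).le) (hstep 0) hsum.hasSum htele

lemma tsum_rpow_neg_gt_lt_rpow_neg {r : ℝ} {d : ℕ} (hd : 0 < d) (hdr : (d : ℝ) ≤ r - 1) :
    ∑' m : {m : ℕ // d < m}, ((m : ℕ) : ℝ) ^ (-r) < (d : ℝ) ^ (-r) := by
  have hd' : (1 : ℝ) ≤ d := by exact_mod_cast hd
  refine (tsum_rpow_neg_gt_lt (by linarith) hd).trans_le ?_
  rw [div_le_iff₀ (by linarith), sub_eq_add_neg, rpow_add (by linarith), rpow_one]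
  exact mul_le_mul_of_nonneg_right hdr (rpow_nonneg (by linarith) _) |>.trans_eq (mul_comm _ _)

lemma sum_le_tsum_subtype_lt {f : ℕ → ℝ} (hf : 0 ≤ f) (hs : Summable f) {s : Finset ℕ} {d : ℕ}
    (hd : ∀ e ∈ s, d < e) : ∑ e ∈ s, f e ≤ ∑' m : {m : ℕ // d < m}, f m := by
  rw [← Finset.sum_subtype_of_mem f hd]
  exact (hs.subtype _).sum_le_tsum _ fun m _ => hf m

lemma sub_tsum_subtype_lt_le_sum_sub_sum {f : ℕ → ℝ} (hf : 0 ≤ f) (hs : Summable f)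
    {A B : Finset ℕ} {d : ℕ} (hd : d ∈ A \ B) (hBA : ∀ e ∈ B \ A, d < e) :
    f d - ∑' m : {m : ℕ // d < m}, f m ≤ ∑ e ∈ A, f e - ∑ e ∈ B, f e := by
  rw [← Finset.sum_sdiff_sub_sum_sdiff]
  exact sub_le_sub (Finset.single_le_sum (fun e _ => hf e) hd) (sum_le_tsum_subtype_lt hf hs hBA)

lemma exists_prime_pow_eq_of_minimal_mem_divisors_sdiff {a b d : ℕ} (hb : b ≠ 0)
    (hd : d ∈ a.divisors \ b.divisors) (hmin : ∀ e ∈ a.divisors \ b.divisors, d ≤ e) :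
    ∃ p k : ℕ, p.Prime ∧ 1 ≤ k ∧ p ^ k = d := by
  simp only [Finset.mem_sdiff, Nat.mem_divisors, not_and, not_not] at hd
  obtain ⟨⟨hda, ha⟩, hdb⟩ := hd
  have hndvd : ¬ d ∣ b := fun h => hb (hdb h)
  rw [Nat.dvd_iff_prime_pow_dvd_dvd] at hndvd
  push Not at hndvd
  obtain ⟨p, k, hp, hpkd, hpkb⟩ := hndvd
  have hk : 1 ≤ k := Nat.one_le_iff_ne_zero.2 (by rintro rfl; simp at hpkb)
  refine ⟨p, k, hp, hk, le_antisymm (Nat.le_of_dvd ?_ hpkd) ?_⟩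
  · exact Nat.pos_of_ne_zero (by rintro rfl; exact ha (zero_dvd_iff.1 hda))
  · exact hmin _ (Finset.mem_sdiff.2 ⟨Nat.mem_divisors.2 ⟨hpkd.trans hda, ha⟩,
      fun h => hpkb (Nat.dvd_of_mem_divisors h)⟩)

lemma sInf_finite_values_pos_and_le {r ε : ℝ} (hr : 2 ≤ r) (g : ℕ → ℝ)
    (hg : ∀ d : ℕ, 0 < d → (d : ℝ) ≤ r - 1 → 0 < g d)
    (hε : ε = sInf {x : ℝ | ∃ d : ℕ, 0 < d ∧ (d : ℝ) ≤ r - 1 ∧ x = g d}) :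
    0 < ε ∧ ∀ d : ℕ, 0 < d → (d : ℝ) ≤ r - 1 → ε ≤ g d := by
  set T := {d : ℕ | 0 < d ∧ (d : ℝ) ≤ r - 1}
  have hS : {x : ℝ | ∃ d : ℕ, 0 < d ∧ (d : ℝ) ≤ r - 1 ∧ x = g d} = g '' T := by
    ext x; simp [T, eq_comm, and_assoc]
  have hT : (g '' T).Finite :=
    ((Set.finite_Iic ⌊r - 1⌋₊).subset fun d hd => Nat.le_floor hd.2).image g
  have hne : (g '' T).Nonempty := ⟨g 1, 1, ⟨one_pos, by push_cast; linarith⟩, rfl⟩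
  rw [hS] at hε
  obtain ⟨d, ⟨hd, hdr⟩, hgd⟩ := hε ▸ hne.csInf_mem hT
  exact ⟨hgd ▸ hg d hd hdr, fun d hd hdr => hε ▸ csInf_le hT.bddBelow ⟨d, ⟨hd, hdr⟩, rfl⟩⟩

lemma sigmaNeg_le_or_le_sub {r ε : ℝ} (hr : 1 < r) {n m : ℕ} (hm : m ≠ 0)
    (h : ∀ p k : ℕ, p.Prime → 1 ≤ k → p ^ k ∣ n → ((p ^ k : ℕ) : ℝ) ≤ r - 1) (hε : 0 ≤ ε)
    (hgap : ∀ d : ℕ, 0 < d → (d : ℝ) ≤ r - 1 →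
      ε ≤ (d : ℝ) ^ (-r) - ∑' m : {m : ℕ // d < m}, ((m : ℕ) : ℝ) ^ (-r)) :
    sigmaNeg r n ≤ sigmaNeg r m ∨ sigmaNeg r m ≤ sigmaNeg r n - ε := by
  have hf : 0 ≤ fun d : ℕ => (d : ℝ) ^ (-r) := fun d => rpow_nonneg (Nat.cast_nonneg d) _
  have hs : Summable fun d : ℕ => (d : ℝ) ^ (-r) := summable_nat_rpow.2 (by linarith)
  by_cases hsub : n.divisors ⊆ m.divisors
  · exact Or.inl (Finset.sum_le_sum_of_subset_of_nonneg hsub fun e _ _ => hf e)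
  have hne : (n.divisors \ m.divisors).Nonempty := Finset.sdiff_nonempty.2 hsub
  set d := (n.divisors \ m.divisors).min' hne
  have hd : d ∈ n.divisors \ m.divisors := Finset.min'_mem _ hne
  have hdn : d ∈ n.divisors := (Finset.mem_sdiff.1 hd).1
  obtain ⟨p, k, hp, hk, hpk⟩ := exists_prime_pow_eq_of_minimal_mem_divisors_sdiff hm hd
    fun e he => Finset.min'_le _ e he
  have hdr : (d : ℝ) ≤ r - 1 := hpk ▸ h p k hp hk (hpk ▸ Nat.dvd_of_mem_divisors hdn)
  by_cases hsmaller : ∃ e ∈ m.divisors \ n.divisors, e < d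
  · obtain ⟨e, he, hed⟩ := hsmaller
    have hdiff := sub_tsum_subtype_lt_le_sum_sub_sum hf hs he
      fun e' he' => hed.trans_le (Finset.min'_le _ e' he')
    have her : (e : ℝ) ≤ r - 1 := by
      have : (e : ℝ) + 1 ≤ d := by exact_mod_cast hed
      linarith
    have := hgap e (Nat.pos_of_mem_divisors (Finset.mem_sdiff.1 he).1) her
    left
    unfold sigmaNeg
    linarith
  · push Not at hsmaller
    have hdiff := sub_tsum_subtype_lt_le_sum_sub_sum hf hs hd fun e he =>
      (hsmaller e he).lt_of_ne fun hed => (Finset.mem_sdiff.1 he).2 (hed ▸ hdn)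
    have := hgap d (Nat.pos_of_mem_divisors hdn) hdr
    right
    unfold sigmaNeg
    linarith

theorem statement12_general (r : ℝ) (hr : 2 ≤ r) (n : ℕ)
    (h : ∀ p k : ℕ, p.Prime → 1 ≤ k → p ^ k ∣ n → ((p ^ k : ℕ) : ℝ) ≤ r - 1)
    (ε : ℝ)
    (hε : ε = sInf {x : ℝ | ∃ d : ℕ, 0 < d ∧ (d : ℝ) ≤ r - 1 ∧
      x = (d : ℝ) ^ (-r) - ∑' m : {m : ℕ // d < m}, ((m : ℕ) : ℝ) ^ (-r)}) :
    0 < ε ∧ ∀ m : ℕ, 0 < m →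
      sigmaNeg r n ≤ sigmaNeg r m ∨ sigmaNeg r m ≤ sigmaNeg r n - ε := by
  obtain ⟨hεpos, hεle⟩ := sInf_finite_values_pos_and_le hr _
    (fun d hd hdr => sub_pos.2 (tsum_rpow_neg_gt_lt_rpow_neg hd hdr)) hε
  exact ⟨hεpos, fun m hm => sigmaNeg_le_or_le_sub (by linarith) hm.ne' h hεpos.le hεle⟩

theorem statement12 (r : ℝ) (hr : 2 ≤ r) (n : ℕ) (hn : 0 < n)
    (h : ∀ p k : ℕ, p.Prime → 1 ≤ k → p ^ k ∣ n → ((p ^ k : ℕ) : ℝ) ≤ r - 1)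
    (ε : ℝ)
    (hε : ε = sInf {x : ℝ | ∃ d : ℕ, 0 < d ∧ (d : ℝ) ≤ r - 1 ∧
      x = (d : ℝ) ^ (-r) - ∑' m : {m : ℕ // d < m}, ((m : ℕ) : ℝ) ^ (-r)}) :
    0 < ε ∧ ∀ m : ℕ, 0 < m →
      sigmaNeg r n ≤ sigmaNeg r m ∨ sigmaNeg r m ≤ sigmaNeg r n - ε :=
  statement12_general r hr n h ε hε
end

section
/- Let r > 1 be a real number and let n be a squarefree positive integer all of whose prime factors are less than r − 1. Then σ_{-r}(n) is the right endpoint of a gap of cl(σ_{-r}(ℕ)): there exists ε > 0 such that the open interval (σ_{-r}(n) − ε, σ_{-r}(n)) is disjoint from cl(σ_{-r}(ℕ)), while σ_{-r}(n) ∈ cl(σ_{-r}(ℕ)). -/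
open scoped BigOperators

/-! Compare `σ_{-r}(m)` with `σ_{-r}(n)` at the least `e` dividing exactly one of `m` and `n`.
Losing the divisor `e` costs `e^{-r}`, while all divisors larger than `e` together contribute at
most `∫_e^∞ x^{-r} dx = e^{1-r}/(r-1)`, which is less than `e^{-r}` when `e < r - 1`. If `e` divides
`n` but not `m`, then `σ_{-r}(m) ≤ σ_{-r}(n) - (e^{-r} - e^{1-r}/(r-1))`, and if it divides `m`
then `σ_{-r}(m) > σ_{-r}(n)`. Such an `e < r - 1` exists unless every prime factor of `n` divides
`m`, and then `n ∣ m` because `n` is squarefree, so again `σ_{-r}(m) ≥ σ_{-r}(n)`. The finitely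
many possible `e < r - 1` give a uniform gap below `σ_{-r}(n)`. -/

open Finset
open scoped symmDiff

theorem sum_Ioc_rpow_neg_le {r : ℝ} (hr : 1 < r) {e : ℕ} (he : 0 < e) (M : ℕ) :
    ∑ d ∈ Ioc e M, (d : ℝ) ^ (-r) ≤ (e : ℝ) ^ (1 - r) / (r - 1) := by
  have hr1 : 0 < r - 1 := by linarith
  rcases lt_or_ge M e with hMe | heM
  · rw [Ioc_eq_empty (by omega), sum_empty]
    positivity
  have he' : (0 : ℝ) < e := by exact_mod_cast he
  have hanti : AntitoneOn (fun x : ℝ => x ^ (-r)) (Set.Icc (e : ℝ) M) :=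
    fun x hx y _ hxy => Real.rpow_le_rpow_of_nonpos (he'.trans_le hx.1) hxy (by linarith)
  have hzero : (0 : ℝ) ∉ Set.uIcc (e : ℝ) M := by
    rw [Set.uIcc_of_le (by exact_mod_cast heM)]
    exact fun h => he'.not_ge h.1
  have hint := hanti.sum_le_integral_Ico heM
  rw [integral_rpow (Or.inr ⟨by linarith, hzero⟩), sum_Ico_add' (fun i : ℕ => (i : ℝ) ^ (-r)),
    Ico_add_one_add_one_eq_Ioc] at hint
  calc ∑ d ∈ Ioc e M, (d : ℝ) ^ (-r)
      ≤ ((M : ℝ) ^ (-r + 1) - (e : ℝ) ^ (-r + 1)) / (-r + 1) := hint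
    _ = ((e : ℝ) ^ (1 - r) - (M : ℝ) ^ (1 - r)) / (r - 1) := by
        rw [neg_add_eq_sub, ← neg_sub r 1, div_neg, ← neg_div, neg_sub]
    _ ≤ (e : ℝ) ^ (1 - r) / (r - 1) := by
        gcongr
        exact sub_le_self _ (by positivity)

theorem sum_rpow_neg_le_of_forall_lt {r : ℝ} (hr : 1 < r) {e : ℕ} (he : 0 < e) {T : Finset ℕ}
    (hT : ∀ d ∈ T, e < d) : ∑ d ∈ T, (d : ℝ) ^ (-r) ≤ (e : ℝ) ^ (1 - r) / (r - 1) := by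
  refine le_trans ?_ (sum_Ioc_rpow_neg_le hr he (T.sup id))
  refine sum_le_sum_of_subset_of_nonneg (fun d hd => mem_Ioc.2 ⟨hT d hd, ?_⟩) ?_
  · exact le_sup (f := id) hd
  · exact fun d _ _ => Real.rpow_nonneg (Nat.cast_nonneg d) _

noncomputable def divisorGap (r : ℝ) (e : ℕ) : ℝ := (e : ℝ) ^ (-r) - (e : ℝ) ^ (1 - r) / (r - 1)

theorem divisorGap_pos {r : ℝ} {e : ℕ} (he : 0 < e) (her : (e : ℝ) < r - 1) :
    0 < divisorGap r e := by
  have he' : (0 : ℝ) < e := by exact_mod_cast he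
  have hr1 : 0 < r - 1 := he'.trans her
  have hpow : (e : ℝ) ^ (1 - r) = (e : ℝ) ^ (-r) * e := by
    rw [sub_eq_neg_add, Real.rpow_add_one he'.ne']
  rw [divisorGap, hpow, mul_div_assoc, ← mul_one_sub]
  exact mul_pos (Real.rpow_pos_of_pos he' _) (by rw [sub_pos, div_lt_one hr1]; exact her)

theorem exists_pos_forall_le_divisorGap (r : ℝ) :
    ∃ ε > 0, ∀ e ∈ Ioo 0 ⌈r - 1⌉₊, ε ≤ divisorGap r e := by
  refine ((eventually_mem_nhdsWithin (a := (0 : ℝ)) (s := Set.Ioi 0)).and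
    ((Filter.eventually_all_finset _).2 fun e he => ?_)).exists
  have he := mem_Ioo.1 he
  exact (eventually_le_nhds (divisorGap_pos he.1 (Nat.lt_ceil.1 he.2))).filter_mono
    nhdsWithin_le_nhds

theorem sum_rpow_neg_add_divisorGap_le {r : ℝ} (hr : 1 < r) {D D' : Finset ℕ} {e : ℕ}
    (he0 : 0 < e) (heD : e ∈ D) (heD' : e ∉ D') (hmin : ∀ d ∈ D ∆ D', e ≤ d) :
    ∑ d ∈ D', (d : ℝ) ^ (-r) + divisorGap r e ≤ ∑ d ∈ D, (d : ℝ) ^ (-r) := by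
  have hlt : ∀ d ∈ D' \ D, e < d := fun d hd =>
    (hmin d (mem_symmDiff.2 (Or.inr (mem_sdiff.1 hd)))).lt_of_ne
      fun hed => (mem_sdiff.1 hd).2 (hed ▸ heD)
  have hgain := sum_rpow_neg_le_of_forall_lt hr he0 hlt
  have hloss : (e : ℝ) ^ (-r) ≤ ∑ d ∈ D \ D', (d : ℝ) ^ (-r) :=
    single_le_sum (fun d _ => Real.rpow_nonneg (Nat.cast_nonneg d) _) (mem_sdiff.2 ⟨heD, heD'⟩)
  rw [← sum_inter_add_sum_sdiff D D', ← sum_inter_add_sum_sdiff D' D, inter_comm, divisorGap]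
  linarith

theorem Squarefree.dvd_of_forall_mem_primeFactors_dvd {n m : ℕ} (hsq : Squarefree n)
    (h : ∀ p ∈ n.primeFactors, p ∣ m) : n ∣ m :=
  Nat.prod_primeFactors_of_squarefree hsq ▸
    prod_primes_dvd m (fun _ hp => (Nat.prime_of_mem_primeFactors hp).prime) h

theorem sigmaNeg_le_of_dvd (r : ℝ) {n m : ℕ} (hm : m ≠ 0) (h : n ∣ m) :
    sigmaNeg r n ≤ sigmaNeg r m :=
  sum_le_sum_of_subset_of_nonneg (Nat.divisors_subset_of_dvd hm h)
    fun d _ _ => Real.rpow_nonneg (Nat.cast_nonneg d) _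

theorem sigmaNeg_le_or_add_divisorGap_le {r : ℝ} (hr : 1 < r) {n m : ℕ} (hn : n ≠ 0)
    (hm : m ≠ 0) (hsq : Squarefree n) (hsmall : ∀ p ∈ n.primeFactors, (p : ℝ) < r - 1) :
    sigmaNeg r n ≤ sigmaNeg r m ∨
      ∃ e ∈ Ioo 0 ⌈r - 1⌉₊, sigmaNeg r m + divisorGap r e ≤ sigmaNeg r n := by
  by_cases hdvd : n ∣ m
  · exact Or.inl (sigmaNeg_le_of_dvd r hm hdvd)
  obtain ⟨p, hp, hpm⟩ : ∃ p ∈ n.primeFactors, ¬p ∣ m := by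
    by_contra! h
    exact hdvd (hsq.dvd_of_forall_mem_primeFactors_dvd h)
  have hpS : p ∈ n.divisors ∆ m.divisors := mem_symmDiff.2 <| Or.inl
    ⟨Nat.mem_divisors.2 ⟨Nat.dvd_of_mem_primeFactors hp, hn⟩,
      fun h => hpm (Nat.dvd_of_mem_divisors h)⟩
  set e := (n.divisors ∆ m.divisors).min' ⟨p, hpS⟩
  have hmin : ∀ d ∈ n.divisors ∆ m.divisors, e ≤ d := fun d hd => min'_le _ _ hd
  have her : (e : ℝ) < r - 1 := (Nat.cast_le.2 (hmin p hpS)).trans_lt (hsmall p hp)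
  rcases mem_symmDiff.1 (min'_mem _ ⟨p, hpS⟩) with ⟨hen, hem⟩ | ⟨hem, hen⟩
  · have he0 := Nat.pos_of_mem_divisors hen
    exact Or.inr ⟨e, mem_Ioo.2 ⟨he0, Nat.lt_ceil.2 her⟩,
      sum_rpow_neg_add_divisorGap_le hr he0 hen hem hmin⟩
  · have he0 := Nat.pos_of_mem_divisors hem
    have hgain :=
      sum_rpow_neg_add_divisorGap_le hr he0 hem hen (symmDiff_comm n.divisors _ ▸ hmin)
    have hgap := divisorGap_pos he0 her
    left
    unfold sigmaNeg
    linarith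

theorem statement13 (r : ℝ) (hr : 1 < r) (n : ℕ) (hn : 0 < n)
    (hsq : Squarefree n) (h : ∀ p : ℕ, p.Prime → p ∣ n → (p : ℝ) < r - 1) :
    sigmaNeg r n ∈ sigmaClosure r ∧
      ∃ ε > 0, Set.Ioo (sigmaNeg r n - ε) (sigmaNeg r n) ∩ sigmaClosure r = ∅ := by
  refine ⟨subset_closure ⟨⟨n, hn⟩, rfl⟩, ?_⟩
  obtain ⟨ε, hε, hεgap⟩ := exists_pos_forall_le_divisorGap r
  refine ⟨ε, hε, Set.disjoint_iff_inter_eq_empty.1 <|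
    Disjoint.closure_right (Set.disjoint_right.2 ?_) isOpen_Ioo⟩
  rintro _ ⟨m, rfl⟩ ⟨hlo, hhi⟩
  rcases sigmaNeg_le_or_add_divisorGap_le hr hn.ne' m.ne_zero hsq
    (fun p hp => h p (Nat.prime_of_mem_primeFactors hp) (Nat.dvd_of_mem_primeFactors hp))
    with hle | ⟨e, he, hle⟩
  · linarith
  · linarith [hεgap e he]
end
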